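/- Let p : ℕ → (Λ → ℂ) be the standard basis of discrete analytic polynomials. Then for all z, w ∈ Λ and all n ∈ ℕ, the discrete Chu–Vandermonde identity holds: p n (z + w) = Σ_{k=0}^{n} p k (z) · p (n−k) (w). -/

import Mathlib

open Complex

noncomputable section

/-- The Gaussian integer lattice Λ = ℤ + iℤ. -/
abbrev GI := GaussianInt

/-- The lattice element i. -/
def Ii : GI := ⟨0, 1⟩

/-- The difference operator δ_x. -/
def dx (f : GI → ℂ) : GI → ℂ := fun z => f (z + 1) - f z

/-- The difference operator δ_y. -/
def dy (f : GI → ℂ) : GI → ℂ := fun z => f (z + Ii) - f z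

/-- Discrete analyticity on the full lattice Λ. -/
def DA (f : GI → ℂ) : Prop :=
  ∀ z : GI, (f (z + 1 + Ii) - f z) / (1 + I) = (f (z + 1) - f (z + Ii)) / (1 - I)

/-- α₊ = (1+i)/2. -/
def ap : ℂ := (1 + I) / 2

/-- α₋ = (1−i)/2. -/
def am : ℂ := (1 - I) / 2

/-- The defining property of the standard basis of discrete analytic polynomials
z^(n): each is discrete analytic, p 0 ≡ 1, p (n+1) vanishes at 0, and
δ_x (p (n+1)) = p n. -/
def IsStdBasis (p : ℕ → GI → ℂ) : Prop :=
  (∀ n, DA (p n)) ∧ (∀ z : GI, p 0 z = 1) ∧ (∀ n, p (n + 1) 0 = 0) ∧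
    (∀ n, dx (p (n + 1)) = p n)


lemma one_add_I_ne : (1 + I : ℂ) ≠ 0 := by simp [Complex.ext_iff]
lemma one_sub_I_ne : (1 - I : ℂ) ≠ 0 := by simp [Complex.ext_iff]

lemma DA_iff (f : GI → ℂ) : DA f ↔
    ∀ z, (1 - I) * (f (z + 1 + Ii) - f z) = (1 + I) * (f (z + 1) - f (z + Ii)) := by
  unfold DA
  refine forall_congr' fun z => ?_
  rw [div_eq_div_iff one_add_I_ne one_sub_I_ne]
  constructor <;> intro h <;> linear_combination h

lemma DA_sum (s : Finset ℕ) (f : ℕ → GI → ℂ) (c : ℕ → ℂ)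
    (h : ∀ k ∈ s, DA (f k)) :
    DA (fun z => ∑ k ∈ s, f k z * c k) := by
  rw [DA_iff]
  intro z
  rw [← Finset.sum_sub_distrib, ← Finset.sum_sub_distrib, Finset.mul_sum, Finset.mul_sum]
  refine Finset.sum_congr rfl fun k hk => ?_
  have hk' := (DA_iff (f k)).mp (h k hk) z
  linear_combination c k * hk'

lemma DA_shift (f : GI → ℂ) (w : GI) (hf : DA f) : DA (fun z => f (z + w)) := by
  intro z
  have h1 : z + 1 + Ii + w = z + w + 1 + Ii := by ring
  have h2 : z + 1 + w = z + w + 1 := by ring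
  have h3 : z + Ii + w = z + w + Ii := by ring
  simpa only [h1, h2, h3] using hf (z + w)

lemma dy_eq (f : GI → ℂ) (hf : DA f) (z : GI) :
    f (z + Ii) - f z =
      (1 + I) / 2 * (f (z + 1) - f z) - (1 - I) / 2 * (f (z + Ii + 1) - f (z + Ii)) := by
  have h := (DA_iff f).mp hf z
  have h4 : z + Ii + 1 = z + 1 + Ii := by ring
  rw [h4]
  linear_combination ((1 : ℂ) / 2) * h

lemma uniq (f g : GI → ℂ) (hf : DA f) (hg : DA g) (h0 : f 0 = g 0)
    (hdx : ∀ z, f (z + 1) - f z = g (z + 1) - g z) : ∀ z, f z = g z := by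
  have hx : ∀ z : GI, f (z + 1) - g (z + 1) = f z - g z := by
    intro z; linear_combination hdx z
  have hy : ∀ z : GI, f (z + Ii) - g (z + Ii) = f z - g z := by
    intro z
    linear_combination dy_eq f hf z - dy_eq g hg z + (1 + I) / 2 * hdx z
      - (1 - I) / 2 * hdx (z + Ii)
  have hx' : ∀ z : GI, f (z - 1) - g (z - 1) = f z - g z := by
    intro z
    have := hx (z - 1)
    simp only [sub_add_cancel] at this
    linear_combination - this
  have hy' : ∀ z : GI, f (z - Ii) - g (z - Ii) = f z - g z := by
    intro z
    have := hy (z - Ii)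
    simp only [sub_add_cancel] at this
    linear_combination - this
  have col : ∀ b : ℤ, f (⟨0, b⟩ : GI) - g ⟨0, b⟩ = f 0 - g 0 := by
    intro b
    induction b using Int.induction_on with
    | zero => rfl
    | succ n ih =>
      have e : (⟨0, (n : ℤ)⟩ : GI) + Ii = ⟨0, (n : ℤ) + 1⟩ := by
        simp [Ii, Zsqrtd.ext_iff]
      rw [← e, hy]; exact ih
    | pred n ih =>
      have e : (⟨0, -(n : ℤ) - 1⟩ : GI) = (⟨0, -(n : ℤ)⟩ : GI) - Ii := by
        simp [Ii, Zsqrtd.ext_iff]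
      rw [e, hy']; exact ih
  have row : ∀ (a b : ℤ), f (⟨a, b⟩ : GI) - g ⟨a, b⟩ = f ⟨0, b⟩ - g ⟨0, b⟩ := by
    intro a b
    induction a using Int.induction_on with
    | zero => rfl
    | succ n ih =>
      have e : (⟨(n : ℤ), b⟩ : GI) + 1 = ⟨(n : ℤ) + 1, b⟩ := by
        simp [Zsqrtd.ext_iff]
      rw [← e, hx]; exact ih
    | pred n ih =>
      have e : (⟨-(n : ℤ) - 1, b⟩ : GI) = (⟨-(n : ℤ), b⟩ : GI) - 1 := by
        simp [Zsqrtd.ext_iff]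
      rw [e, hx']; exact ih
  intro z
  have hz2 : f z - g z = f 0 - g 0 := by
    have : z = (⟨z.re, z.im⟩ : GI) := rfl
    rw [this, row z.re z.im, col z.im]
  linear_combination hz2 + h0

/-- discrete Chu–Vandermonde identity:
p n (z+w) = Σ_{k=0}^{n} p k (z) · p (n−k) (w). -/
theorem stmt6 (p : ℕ → GI → ℂ) (hp : IsStdBasis p) :
    ∀ (z w : GI) (n : ℕ),
      p n (z + w) = ∑ k ∈ Finset.range (n + 1), p k z * p (n - k) w := by
  obtain ⟨hDA, h00, hz0, hdxp⟩ := hp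
  have hdx' : ∀ m (v : GI), p (m + 1) (v + 1) - p (m + 1) v = p m v := by
    intro m v
    have := congrFun (hdxp m) v
    simpa [dx] using this
  intro z w n
  induction n generalizing z with
  | zero => simp [h00]
  | succ n ih =>
    refine uniq (fun z => p (n + 1) (z + w))
      (fun z => ∑ k ∈ Finset.range (n + 1 + 1), p k z * p (n + 1 - k) w)
      (DA_shift _ w (hDA _)) (DA_sum _ _ _ fun k _ => hDA k) ?_ ?_ z
    · show p (n + 1) (0 + w) = ∑ k ∈ Finset.range (n + 1 + 1), p k 0 * p (n + 1 - k) w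
      rw [zero_add, Finset.sum_range_succ']
      simp [hz0, h00]
    · intro u
      show p (n + 1) (u + 1 + w) - p (n + 1) (u + w) = _
      have e1 : u + 1 + w = u + w + 1 := by ring
      rw [e1, hdx' n (u + w), ih u, ← Finset.sum_sub_distrib]
      simp only [← sub_mul]
      rw [Finset.sum_range_succ' (fun k => (p k (u + 1) - p k u) * p (n + 1 - k) w) (n + 1)]
      simp only [h00, sub_self, zero_mul, add_zero, Nat.succ_sub_succ]
      exact Finset.sum_congr rfl fun k _ => by rw [hdx' k u]
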